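/- Let G be an n-player game on a possibly infinite arena in which each player i's objective Ω_i is one of Reach(T_i), Büchi(T_i) or coBüchi(T_i) for some target set T_i ⊆ V. A play π = v_0 v_1 … is the outcome from v_0 of some Nash equilibrium if and only if for every player i with π ∉ Ω_i and every j ∈ ℕ, v_j ∉ W_i(Ω_i), where W_i(Ω_i) is the winning region of player i in their coalition game. -/

import Mathlib

open scoped ENNReal Classical

/-- An `n`-player arena on a (possibly infinite) directed graph: an edge relation
with no deadlocks, together with an assignment of each vertex to its owner. -/
structure Arena (V : Type) (n : ℕ) where
  E : V → V → Prop
  owner : V → Fin n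
  no_deadlock : ∀ v, ∃ v', E v v'

namespace Arena

variable {V : Type} {n : ℕ}

/-- A play: an infinite sequence of vertices following edges. -/
def IsPlay (A : Arena V n) (π : ℕ → V) : Prop := ∀ j, A.E (π j) (π (j + 1))

/-- A strategy: given the past history (the earlier vertices, oldest first) and the
current vertex, pick an `E`-successor of the current vertex. -/
structure Strategy (A : Arena V n) where
  next : List V → V → V
  valid : ∀ h v, A.E v (next h v)

/-- The list of the first `j` vertices of a play. -/
def pref (π : ℕ → V) (j : ℕ) : List V := (List.range j).map π

/-- A play is consistent with the strategy `σ` used by player `i`. -/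
def Consistent (A : Arena V n) (i : Fin n) (σ : A.Strategy) (π : ℕ → V) : Prop :=
  ∀ j, A.owner (π j) = i → π (j + 1) = σ.next (pref π j) (π j)

/-- A memoryless strategy only depends on the current vertex. -/
def Memoryless {A : Arena V n} (σ : A.Strategy) : Prop :=
  ∀ h h' v, σ.next h v = σ.next h' v

def outcomeAux (A : Arena V n) (σ : Fin n → A.Strategy) (v0 : V) : ℕ → List V × V
  | 0 => ([], v0)
  | j + 1 =>
      let p := outcomeAux A σ v0 j
      (p.1 ++ [p.2], (σ (A.owner p.2)).next p.1 p.2)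

/-- The outcome of the strategy profile `σ` from `v0`: the unique play from `v0`
consistent with every strategy of the profile. -/
def outcome (A : Arena V n) (σ : Fin n → A.Strategy) (v0 : V) (j : ℕ) : V :=
  (outcomeAux A σ v0 j).2

/-- Reachability objective: visit `T`. -/
def ReachObj (T : Set V) : Set (ℕ → V) := {π | ∃ j, π j ∈ T}

/-- Safety objective: never visit `T`. -/
def SafeObj (T : Set V) : Set (ℕ → V) := {π | ∀ j, π j ∉ T}

/-- Büchi objective: visit `T` infinitely often. -/
def BuchiObj (T : Set V) : Set (ℕ → V) := {π | ∀ j, ∃ k, j ≤ k ∧ π k ∈ T}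

/-- co-Büchi objective: visit `T` only finitely often. -/
def CoBuchiObj (T : Set V) : Set (ℕ → V) := {π | ∃ j, ∀ k, j ≤ k → π k ∉ T}

/-- Shortest-path cost of a play: the total weight up to the first visit of `T`,
and `⊤` if `T` is never visited. -/
noncomputable def spCost (w : V → V → ℕ) (T : Set V) (π : ℕ → V) : ℝ≥0∞ :=
  if ∃ k, π k ∈ T then
    (Finset.range (sInf {k | π k ∈ T})).sum fun j => (w (π j) (π (j + 1)) : ℝ≥0∞)
  else ⊤

/-- Winning region of player `p` (whose objective is `Ω`) in a two-player game:
vertices from which `p` has a strategy all of whose consistent plays lie in `Ω`. -/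
def WinRegion (A : Arena V 2) (p : Fin 2) (Ω : Set (ℕ → V)) : Set V :=
  {v | ∃ σ : A.Strategy, ∀ π, A.IsPlay π → π 0 = v → A.Consistent p σ π → π ∈ Ω}

/-- Lower value `inf_{σ₁} sup_{σ₂}` of a two-player zero-sum game with cost `c`
(minimised by player 1, maximised by player 2). -/
noncomputable def valIS (A : Arena V 2) (c : (ℕ → V) → ℝ≥0∞) (v : V) : ℝ≥0∞ :=
  ⨅ σ1 : A.Strategy, ⨆ σ2 : A.Strategy, c (outcome A ![σ1, σ2] v)

/-- Upper value `sup_{σ₂} inf_{σ₁}`. -/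
noncomputable def valSI (A : Arena V 2) (c : (ℕ → V) → ℝ≥0∞) (v : V) : ℝ≥0∞ :=
  ⨆ σ2 : A.Strategy, ⨅ σ1 : A.Strategy, c (outcome A ![σ1, σ2] v)

/-- Nash equilibrium from `v0` for cost functions (each player minimises):
no unilateral deviation decreases the deviator's cost. -/
def IsNECost (A : Arena V n) (cost : Fin n → (ℕ → V) → ℝ≥0∞)
    (σ : Fin n → A.Strategy) (v0 : V) : Prop :=
  ∀ (i : Fin n) (τ : A.Strategy),
    cost i (outcome A σ v0) ≤ cost i (outcome A (Function.update σ i τ) v0)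

/-- Nash equilibrium from `v0` for objectives: if a unilateral deviation of player `i`
satisfies `Ω i`, then so does the equilibrium outcome. -/
def IsNEObj (A : Arena V n) (Ω : Fin n → Set (ℕ → V))
    (σ : Fin n → A.Strategy) (v0 : V) : Prop :=
  ∀ (i : Fin n) (τ : A.Strategy),
    outcome A (Function.update σ i τ) v0 ∈ Ω i → outcome A σ v0 ∈ Ω i

/-- The coalition arena of player `i`: player `i` (as player `0`) against all others. -/
def coalition (A : Arena V n) (i : Fin n) : Arena V 2 where
  E := A.E
  owner := fun v => if A.owner v = i then 0 else 1
  no_deadlock := A.no_deadlock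

/-- Winning region of player `i` in their coalition game for objective `Ω`. -/
def coalWin (A : Arena V n) (i : Fin n) (Ω : Set (ℕ → V)) : Set V :=
  WinRegion (coalition A i) 0 Ω

/-- Value of a vertex in player `i`'s coalition game with cost `c`. -/
noncomputable def coalVal (A : Arena V n) (i : Fin n) (c : (ℕ → V) → ℝ≥0∞) (v : V) :
    ℝ≥0∞ :=
  valIS (coalition A i) c v

/-- Players whose reachability objective is satisfied by `π`. -/
def satReach (T : Fin n → Set V) (π : ℕ → V) : Set (Fin n) := {i | ∃ j, π j ∈ T i}

/-- Players whose safety objective is satisfied by `π`. -/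
def satSafe (T : Fin n → Set V) (π : ℕ → V) : Set (Fin n) := {i | ∀ j, π j ∉ T i}

/-- Players whose Büchi objective is satisfied by `π`. -/
def satBuchi (T : Fin n → Set V) (π : ℕ → V) : Set (Fin n) :=
  {i | ∀ j, ∃ k, j ≤ k ∧ π k ∈ T i}

/-- Players whose co-Büchi objective is satisfied by `π`. -/
def satCoBuchi (T : Fin n → Set V) (π : ℕ → V) : Set (Fin n) :=
  {i | ∃ j, ∀ k, j ≤ k → π k ∉ T i}

/-- Earliest positions at which the targets visited by `π` are first visited. -/
def visitSet (T : Fin n → Set V) (π : ℕ → V) : Set ℕ :=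
  {m | ∃ i, (∃ j, π j ∈ T i) ∧ m = sInf {j | π j ∈ T i}}

/-- A Mealy machine with memory states `M`. -/
structure Mealy (A : Arena V n) (M : Type) where
  init : M
  up : M → V → M
  nxt : M → V → V
  valid : ∀ m v, A.E v (nxt m v)

/-- The strategy `σ` is induced by the Mealy machine `mm`. -/
def InducedBy {A : Arena V n} {M : Type} (σ : A.Strategy) (mm : Mealy A M) : Prop :=
  ∀ h v, σ.next h v = mm.nxt (h.foldl mm.up mm.init) v

/-- `σ` has memory size at most `b`. -/
def HasMemorySize {A : Arena V n} (σ : A.Strategy) (b : ℕ) : Prop :=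
  ∃ (M : Type) (mm : Mealy A M), Finite M ∧ Nat.card M ≤ b ∧ InducedBy σ mm

/-- `σ` is a finite-memory strategy. -/
def FiniteMemory {A : Arena V n} (σ : A.Strategy) : Prop :=
  ∃ (M : Type) (mm : Mealy A M), Finite M ∧ InducedBy σ mm

/-- The (finite) segment of `π` between positions `a` and `b` is a simple history. -/
def SimpleSeg (π : ℕ → V) (a b : ℕ) : Prop :=
  ∀ m m', a ≤ m → m ≤ b → a ≤ m' → m' ≤ b → π m = π m' → m = m'

/-- The suffix of `π` from position `a` is a simple play. -/
def SimplePlaySeg (π : ℕ → V) (a : ℕ) : Prop :=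
  ∀ m m', a ≤ m → a ≤ m' → π m = π m' → m = m'

/-- The suffix of `π` from position `a` is a simple lasso `p c^ω` with `p c`
a simple history. -/
def SimpleLassoSeg (π : ℕ → V) (a : ℕ) : Prop :=
  ∃ k ℓ, 0 < ℓ ∧ (∀ m, a + k ≤ m → π (m + ℓ) = π m) ∧
    ∀ m m', a ≤ m → m < a + k + ℓ → a ≤ m' → m' < a + k + ℓ → π m = π m' → m = m'

/-- The segment of `π` between positions `a` and `b` is a simple cycle. -/
def SimpleCycleSeg (π : ℕ → V) (a b : ℕ) : Prop :=
  a < b ∧ π b = π a ∧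
    ∀ m m', a ≤ m → m < b → a ≤ m' → m' < b → π m = π m' → m = m'

/-- Total weight of a history (a list of vertices). -/
def histWeight (w : V → V → ℕ) : List V → ℕ
  | [] => 0
  | [_] => 0
  | a :: b :: t => w a b + histWeight w (b :: t)

/-- The list of vertices along positions `a..b` (inclusive) of a play. -/
def segList (π : ℕ → V) (a b : ℕ) : List V :=
  (List.range (b - a + 1)).map fun m => π (a + m)

/-- The segment of `π` between positions `a` and `b` has minimal weight among all
histories that share its first and last vertex and traverse only its vertices. -/
def MinWeightSeg (A : Arena V n) (w : V → V → ℕ) (π : ℕ → V) (a b : ℕ) : Prop :=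
  ∀ h : List V, h ≠ [] → List.Chain' A.E h →
    h.head? = some (π a) → h.getLast? = some (π b) →
    (∀ x ∈ h, ∃ m, a ≤ m ∧ m ≤ b ∧ π m = x) →
    histWeight w (segList π a b) ≤ histWeight w h

/-- Given cut positions `p`, segments number `l` and `l'` of `π` carry the same
vertex sequence. -/
def SegEq (π : ℕ → V) (p : ℕ → ℕ) (l l' : ℕ) : Prop :=
  p (l' + 1) - p l' = p (l + 1) - p l ∧
    ∀ m, m ≤ p (l + 1) - p l → π (p l' + m) = π (p l + m)

/-- There is no cycle of the arena using only vertices of `S` and avoiding `avoid`. -/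
def NoCycleAvoid (A : Arena V n) (S : Set V) (avoid : V) : Prop :=
  ¬ ∃ (m : ℕ) (c : ℕ → V), 0 < m ∧ (∀ j, j < m → A.E (c j) (c (j + 1))) ∧
      c m = c 0 ∧ ∀ j, j ≤ m → c j ∈ S ∧ c j ≠ avoid

end Arena

/-!
If `π` is the outcome of an equilibrium and a player `i` who loses along `π` could win their
coalition game from some `π j`, then `i` would profit from following the equilibrium up to `j`
and the winning strategy afterwards, because reachability, Büchi and co-Büchi objectives are
closed under adding a prefix.

Conversely, let everybody follow `π` and, after the first deviation, let all players punish the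
deviator `i` with the coalition's strategy for the complement of `Ω i`. This needs determinacy of
the coalition games on arbitrary arenas: the complement of an attractor is a trap for the
opponent; the Büchi winning region is the greatest fixed point of `Z ↦ cpre (Attr (S ∩ Z))`,
and the opponent wins co-Büchi on the complement, since from there the next visit to `S` lies in
the opponent's co-Büchi winning region.
-/

namespace Arena

variable {V : Type} {n : ℕ}

section Plays

def suffix (π : ℕ → V) (a : ℕ) : ℕ → V := fun m => π (a + m)

@[simp] lemma suffix_apply (π : ℕ → V) (a m : ℕ) : suffix π a m = π (a + m) := rfl

@[simp] lemma pref_length (π : ℕ → V) (j : ℕ) : (pref π j).length = j := by simp [pref]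

lemma pref_succ (π : ℕ → V) (j : ℕ) : pref π (j + 1) = pref π j ++ [π j] := by
  simp [pref, List.range_succ]

lemma pref_getD (π : ℕ → V) {m j : ℕ} (h : m < j) (d : V) : (pref π j).getD m d = π m := by
  simp [pref, List.getD_eq_getElem?_getD, h]

lemma pref_congr {f g : ℕ → V} {m : ℕ} (h : ∀ k < m, f k = g k) : pref f m = pref g m :=
  List.map_congr_left fun k hk => h k (List.mem_range.mp hk)

lemma pref_drop (π : ℕ → V) (a m : ℕ) : (pref π (a + m)).drop a = pref (suffix π a) m := by
  simp [pref, List.range_add, Function.comp_def]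

lemma IsPlay.suffix {A : Arena V n} {π : ℕ → V} (h : A.IsPlay π) (a : ℕ) :
    A.IsPlay (suffix π a) := fun m => h (a + m)

lemma consistent_suffix_iff {A : Arena V n} {p : Fin n} {σ : A.Strategy} {ρ : ℕ → V} {a : ℕ} :
    A.Consistent p σ (suffix ρ a) ↔
      ∀ m, a ≤ m → A.owner (ρ m) = p →
        ρ (m + 1) = σ.next (pref (suffix ρ a) (m - a)) (ρ m) := by
  constructor
  · intro h m ham hm
    obtain ⟨l, rfl⟩ := Nat.exists_eq_add_of_le ham
    simpa [Nat.add_sub_cancel_left, ← add_assoc] using h l hm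
  · intro h l hl
    simpa [← add_assoc] using h (a + l) (Nat.le_add_right a l) hl

lemma eq_of_steps {F : List V → V → V} {ρ ρ' : ℕ → V} {m : ℕ} (h0 : ρ 0 = ρ' 0)
    (hρ : ∀ l < m, ρ (l + 1) = F (pref ρ l) (ρ l))
    (hρ' : ∀ l < m, ρ' (l + 1) = F (pref ρ' l) (ρ' l)) :
    ∀ l ≤ m, ρ l = ρ' l := by
  intro l
  induction l using Nat.strong_induction_on with
  | _ l ih =>
    match l with
    | 0 => exact fun _ => h0
    | l + 1 =>
      intro hl
      rw [hρ l hl, hρ' l hl, ih l (by omega) (by omega),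
        pref_congr fun k hk => ih k (by omega) (by omega)]

end Plays

section Outcome

variable {A : Arena V n}

lemma outcomeAux_fst (σ : Fin n → A.Strategy) (v : V) (j : ℕ) :
    (outcomeAux A σ v j).1 = pref (outcome A σ v) j := by
  induction j with
  | zero => rfl
  | succ j ih => rw [pref_succ, ← ih]; rfl

lemma outcome_succ (σ : Fin n → A.Strategy) (v : V) (j : ℕ) :
    outcome A σ v (j + 1) =
      (σ (A.owner (outcome A σ v j))).next (pref (outcome A σ v) j) (outcome A σ v j) := by
  rw [← outcomeAux_fst]; rfl

lemma outcome_isPlay (σ : Fin n → A.Strategy) (v : V) : A.IsPlay (outcome A σ v) := by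
  intro j; rw [outcome_succ]; exact (σ _).valid _ _

lemma outcome_consistent (σ : Fin n → A.Strategy) (v : V) (i : Fin n) :
    A.Consistent i (σ i) (outcome A σ v) := by
  intro j hj; rw [outcome_succ, hj]

lemma outcome_eq_of_steps {σ : Fin n → A.Strategy} {ρ : ℕ → V}
    (hs : ∀ m, ρ (m + 1) = (σ (A.owner (ρ m))).next (pref ρ m) (ρ m)) :
    outcome A σ (ρ 0) = ρ :=
  funext fun m => eq_of_steps (F := fun h v => (σ (A.owner v)).next h v)
    (ρ := outcome A σ (ρ 0)) (ρ' := ρ) (m := m) rfl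
    (fun l _ => outcome_succ σ _ l) (fun l _ => hs l) m le_rfl

end Outcome

section Strategies

variable {A : Arena V n}

instance : Nonempty A.Strategy :=
  ⟨⟨fun _ v => (A.no_deadlock v).choose, fun _ v => (A.no_deadlock v).choose_spec⟩⟩

lemma exists_strategy_of_forall_move {C : V → Prop} {Q : V → V → Prop}
    (h : ∀ v, C v → ∃ w, A.E v w ∧ Q v w) :
    ∃ τ : A.Strategy, ∀ hist v, C v → Q v (τ.next hist v) := by
  have h' : ∀ v, ∃ w, A.E v w ∧ (C v → Q v w) := fun v => by
    by_cases hv : C v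
    · obtain ⟨w, hw, hQ⟩ := h v hv
      exact ⟨w, hw, fun _ => hQ⟩
    · obtain ⟨w, hw⟩ := A.no_deadlock v
      exact ⟨w, hw, fun hv' => absurd hv' hv⟩
  choose f hfE hfQ using h'
  exact ⟨⟨fun _ v => f v, fun _ v => hfE v⟩, fun _ v => hfQ v⟩

noncomputable def Strategy.follow (π : ℕ → V) : A.Strategy where
  next h v := if A.E v (π (h.length + 1)) then π (h.length + 1) else (A.no_deadlock v).choose
  valid h v := by
    split_ifs with hE
    · exact hE
    · exact (A.no_deadlock v).choose_spec

lemma Strategy.follow_next {π ρ : ℕ → V} (hπ : A.IsPlay π) {m : ℕ} (hm : ρ m = π m) :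
    (Strategy.follow π : A.Strategy).next (pref ρ m) (ρ m) = π (m + 1) := by
  simp [Strategy.follow, hm, hπ m]

/-- Play `σ` until the first position `k` with `P k (ρ k)`, then play `g k (ρ k)` on the
suffix from `k`. -/
noncomputable def Strategy.switch (σ : A.Strategy) (P : ℕ → V → Prop)
    (g : ℕ → V → A.Strategy) : A.Strategy where
  next h v :=
    if hP : ∃ k, k ≤ h.length ∧ P k ((h ++ [v]).getD k v) then
      (g (Nat.find hP) ((h ++ [v]).getD (Nat.find hP) v)).next (h.drop (Nat.find hP)) v
    else σ.next h v
  valid h v := by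
    split_ifs <;> apply Strategy.valid

lemma getD_pref_append (ρ : ℕ → V) {k m : ℕ} (hkm : k ≤ m) (d : V) :
    (pref ρ m ++ [ρ m]).getD k d = ρ k := by
  rw [← pref_succ, pref_getD ρ (Nat.lt_succ_of_le hkm)]

lemma Strategy.switch_next_of_forall_not {σ : A.Strategy} {P : ℕ → V → Prop}
    {g : ℕ → V → A.Strategy} {ρ : ℕ → V} {m : ℕ} (hP : ∀ l ≤ m, ¬ P l (ρ l)) :
    (σ.switch P g).next (pref ρ m) (ρ m) = σ.next (pref ρ m) (ρ m) := by
  simp only [Strategy.switch]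
  rw [dif_neg]
  rintro ⟨k, hk, hPk⟩
  rw [pref_length] at hk
  rw [getD_pref_append ρ hk] at hPk
  exact hP k hk hPk

lemma Strategy.switch_next_of_first {σ : A.Strategy} {P : ℕ → V → Prop}
    {g : ℕ → V → A.Strategy} {ρ : ℕ → V} {k m : ℕ} (hkm : k ≤ m) (hk : P k (ρ k))
    (hfirst : ∀ l < k, ¬ P l (ρ l)) :
    (σ.switch P g).next (pref ρ m) (ρ m) =
      (g k (ρ k)).next (pref (suffix ρ k) (m - k)) (ρ m) := by
  have hex : ∃ k' ≤ (pref ρ m).length, P k' ((pref ρ m ++ [ρ m]).getD k' (ρ m)) :=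
    ⟨k, by simpa using hkm, by rwa [getD_pref_append ρ hkm]⟩
  have hfind : Nat.find hex = k := by
    refine (Nat.find_eq_iff hex).2 ⟨⟨by simpa using hkm, by rwa [getD_pref_append ρ hkm]⟩, ?_⟩
    rintro l hl ⟨-, hPl⟩
    rw [getD_pref_append ρ (by omega)] at hPl
    exact hfirst l hl hPl
  simp only [Strategy.switch]
  rw [dif_pos hex, hfind, getD_pref_append ρ hkm, ← pref_drop ρ k (m - k),
    Nat.add_sub_cancel' hkm]

lemma Consistent.suffix_of_switch {p : Fin n} {σ : A.Strategy} {P : ℕ → V → Prop}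
    {g : ℕ → V → A.Strategy} {ρ : ℕ → V} {k : ℕ} (hρ : A.Consistent p (σ.switch P g) ρ)
    (hk : P k (ρ k)) (hfirst : ∀ l < k, ¬ P l (ρ l)) :
    A.Consistent p (g k (ρ k)) (suffix ρ k) :=
  consistent_suffix_iff.2 fun m hkm hm => by
    rw [hρ m hm, Strategy.switch_next_of_first hkm hk hfirst]

/-- The last position of `L` whose vertex lies in `R`, and `0` if there is none. -/
noncomputable def lastVisit (R : Set V) (L : List V) (d : V) : ℕ :=
  Nat.findGreatest (fun a => L.getD a d ∈ R) (L.length - 1)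

lemma lastVisit_pref {R : Set V} {ρ : ℕ → V} {a m : ℕ} (ham : a ≤ m) (ha : a ≠ 0 → ρ a ∈ R)
    (hlast : ∀ l, a < l → l ≤ m → ρ l ∉ R) (d : V) :
    lastVisit R (pref ρ (m + 1)) d = a := by
  rw [lastVisit, Nat.findGreatest_eq_iff, pref_length, Nat.add_sub_cancel]
  refine ⟨ham, fun ha0 => ?_, fun l hal hlm => ?_⟩
  · rw [pref_getD ρ (by omega)]; exact ha ha0
  · rw [pref_getD ρ (by omega)]; exact hlast l hal hlm

/-- Restart with `g (ρ a)` at every position `a` with `ρ a ∈ R`; initially play `g (ρ 0)`. -/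
noncomputable def Strategy.restart (R : Set V) (g : V → A.Strategy) : A.Strategy where
  next h v :=
    (g ((h ++ [v]).getD (lastVisit R (h ++ [v]) v) v)).next
      (h.drop (lastVisit R (h ++ [v]) v)) v
  valid _ _ := Strategy.valid _ _ _

lemma Consistent.suffix_of_restart {p : Fin n} {R : Set V} {g : V → A.Strategy} {ρ : ℕ → V}
    {a : ℕ} (hρ : A.Consistent p (Strategy.restart R g) ρ) (ha : a ≠ 0 → ρ a ∈ R)
    (hlast : ∀ l, a < l → ρ l ∉ R) :
    A.Consistent p (g (ρ a)) (suffix ρ a) :=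
  consistent_suffix_iff.2 fun m ham hm => by
    rw [hρ m hm, Strategy.restart]
    simp only
    rw [← pref_succ, lastVisit_pref ham ha (fun l hal _ => hlast l hal), pref_getD ρ (by omega),
      ← pref_drop ρ a (m - a), Nat.add_sub_cancel' ham]

end Strategies

section Objectives

variable {T : Set V} {ρ : ℕ → V} {a : ℕ}

lemma mem_reachObj_of_suffix (h : suffix ρ a ∈ ReachObj T) : ρ ∈ ReachObj T :=
  let ⟨k, hk⟩ := h; ⟨a + k, hk⟩

lemma suffix_mem_reachObj {π : ℕ → V} (h : ρ ∈ ReachObj T) (hπ : π ∉ ReachObj T)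
    (hρπ : ∀ l < a, ρ l = π l) : suffix ρ a ∈ ReachObj T := by
  obtain ⟨k, hk⟩ := h
  have hak : a ≤ k := by
    by_contra hka
    exact hπ ⟨k, hρπ k (by omega) ▸ hk⟩
  exact ⟨k - a, by simpa [Nat.add_sub_cancel' hak] using hk⟩

lemma suffix_mem_buchiObj_iff : suffix ρ a ∈ BuchiObj T ↔ ρ ∈ BuchiObj T := by
  constructor
  · intro h j
    obtain ⟨k, hjk, hk⟩ := h j
    exact ⟨a + k, by omega, hk⟩
  · intro h j
    obtain ⟨k, hjk, hk⟩ := h (a + j)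
    exact ⟨k - a, by omega, by simpa [Nat.add_sub_cancel' (show a ≤ k by omega)] using hk⟩

lemma suffix_mem_coBuchiObj_iff : suffix ρ a ∈ CoBuchiObj T ↔ ρ ∈ CoBuchiObj T := by
  constructor
  · rintro ⟨j, hj⟩
    refine ⟨a + j, fun k hk => ?_⟩
    simpa [Nat.add_sub_cancel' (show a ≤ k by omega)] using hj (k - a) (by omega)
  · rintro ⟨j, hj⟩
    exact ⟨j, fun k hk => hj (a + k) (by omega)⟩

variable {Ω : Set (ℕ → V)}

lemma mem_of_suffix_mem (hΩ : Ω = ReachObj T ∨ Ω = BuchiObj T ∨ Ω = CoBuchiObj T)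
    (h : suffix ρ a ∈ Ω) : ρ ∈ Ω := by
  rcases hΩ with rfl | rfl | rfl
  · exact mem_reachObj_of_suffix h
  · exact suffix_mem_buchiObj_iff.1 h
  · exact suffix_mem_coBuchiObj_iff.1 h

lemma suffix_mem_of_mem (hΩ : Ω = ReachObj T ∨ Ω = BuchiObj T ∨ Ω = CoBuchiObj T)
    {π : ℕ → V} (h : ρ ∈ Ω) (hπ : π ∉ Ω) (hρπ : ∀ l < a, ρ l = π l) :
    suffix ρ a ∈ Ω := by
  rcases hΩ with rfl | rfl | rfl
  · exact suffix_mem_reachObj h hπ hρπ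
  · exact suffix_mem_buchiObj_iff.2 h
  · exact suffix_mem_coBuchiObj_iff.2 h

end Objectives

section Cpre

def cpre (A : Arena V n) (p : Fin n) (Z : Set V) : Set V :=
  {v | (A.owner v = p → ∃ w, A.E v w ∧ w ∈ Z) ∧ (A.owner v ≠ p → ∀ w, A.E v w → w ∈ Z)}

lemma cpre_mono (A : Arena V n) (p : Fin n) {Z Z' : Set V} (h : Z ⊆ Z') :
    A.cpre p Z ⊆ A.cpre p Z' := fun _ ⟨hown, hoth⟩ =>
  ⟨fun hp => let ⟨w, hw, hwZ⟩ := hown hp; ⟨w, hw, h hwZ⟩, fun hp w hw => h (hoth hp w hw)⟩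

lemma succ_mem_of_mem_cpre {A : Arena V n} {q : Fin n} {Z : Set V} {τ : A.Strategy}
    (hτ : ∀ hist v, v ∈ A.cpre q Z → A.owner v = q → τ.next hist v ∈ Z) {ρ : ℕ → V}
    (hρ : A.IsPlay ρ) {l : ℕ} (hl : ρ l ∈ A.cpre q Z)
    (hstep : A.owner (ρ l) = q → ρ (l + 1) = τ.next (pref ρ l) (ρ l)) : ρ (l + 1) ∈ Z := by
  by_cases hown : A.owner (ρ l) = q
  · rw [hstep hown]; exact hτ _ _ hl hown
  · exact hl.2 hown _ (hρ l)

lemma succ_mem_of_trap {A : Arena V n} {q : Fin n} {Z : Set V} (hZ : Z ⊆ A.cpre q Z)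
    {τ : A.Strategy} (hτ : ∀ hist v, v ∈ A.cpre q Z → A.owner v = q → τ.next hist v ∈ Z)
    {ρ : ℕ → V} (hρ : A.IsPlay ρ) (h0 : ρ 0 ∈ A.cpre q Z) {m : ℕ}
    (hcons : ∀ l < m, A.owner (ρ l) = q → ρ (l + 1) = τ.next (pref ρ l) (ρ l)) :
    ∀ l < m, ρ (l + 1) ∈ Z := by
  intro l
  induction l with
  | zero => exact fun h => succ_mem_of_mem_cpre hτ hρ h0 (hcons 0 h)
  | succ l ih => exact fun h => succ_mem_of_mem_cpre hτ hρ (hZ (ih (by omega))) (hcons _ h)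

end Cpre

section TwoPlayer

variable {A : Arena V 2} {p q : Fin 2} {S : Set V}

lemma compl_cpre_compl (hpq : p ≠ q) (Z : Set V) : (A.cpre p Zᶜ)ᶜ = A.cpre q Z := by
  have hfin : ∀ x : Fin 2, x ≠ p → x = q := by revert p q; decide
  ext v
  rcases em (A.owner v = p) with h | h
  · simp [cpre, h, hpq]
  · simp [cpre, hfin _ h, Ne.symm hpq]

lemma winRegion_mono {Ω Ω' : Set (ℕ → V)} (h : Ω ⊆ Ω') :
    WinRegion A p Ω ⊆ WinRegion A p Ω' :=
  fun _ ⟨σ, hσ⟩ => ⟨σ, fun π h1 h2 h3 => h (hσ π h1 h2 h3)⟩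

lemma cpre_winRegion_subset (Ω : Set (ℕ → V)) :
    A.cpre p (WinRegion A p Ω) ⊆ WinRegion A p {ρ | suffix ρ 1 ∈ Ω} := by
  intro u hu
  choose! g hg using fun w (hw : w ∈ WinRegion A p Ω) => hw
  obtain ⟨τ, hτ⟩ := exists_strategy_of_forall_move
    (A := A) (C := fun v => v ∈ A.cpre p (WinRegion A p Ω) ∧ A.owner v = p)
    (Q := fun _ w => w ∈ WinRegion A p Ω) fun v hv => hv.1.1 hv.2
  refine ⟨τ.switch (fun l _ => l = 1) (fun _ w => g w), fun ρ hρ h0 hcons => ?_⟩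
  have h1 : ρ 1 ∈ WinRegion A p Ω := by
    subst h0
    by_cases hown : A.owner (ρ 0) = p
    · rw [hcons 0 hown, Strategy.switch_next_of_forall_not (by omega)]
      exact hτ _ _ ⟨hu, hown⟩
    · exact hu.2 hown _ (hρ 0)
  exact hg _ h1 _ (hρ.suffix 1) rfl (hcons.suffix_of_switch rfl (by omega))

lemma notMem_winRegion_of_edge {Ω : Set (ℕ → V)}
    (hΩ : ∀ ρ, suffix ρ 1 ∈ Ω → ρ ∈ Ω) {v w : V} (hv : v ∉ WinRegion A p Ω)
    (hown : A.owner v = p) (hvw : A.E v w) : w ∉ WinRegion A p Ω := fun hw =>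
  hv <| winRegion_mono hΩ <| cpre_winRegion_subset Ω ⟨fun _ => ⟨w, hvw, hw⟩, (· hown |>.elim)⟩

lemma subset_winRegion_reachObj : S ⊆ WinRegion A p (ReachObj S) :=
  fun _ hv => ⟨Classical.arbitrary _, fun _ _ h0 _ => ⟨0, h0 ▸ hv⟩⟩

lemma compl_winRegion_reachObj_subset_cpre (hpq : p ≠ q) :
    (WinRegion A p (ReachObj S))ᶜ ⊆ A.cpre q (WinRegion A p (ReachObj S))ᶜ := by
  intro v hv
  rw [← compl_cpre_compl hpq, compl_compl]
  exact fun hc => hv (winRegion_mono (fun _ => mem_reachObj_of_suffix) (cpre_winRegion_subset _ hc))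

theorem compl_winRegion_reachObj_subset (hpq : p ≠ q) :
    (WinRegion A p (ReachObj S))ᶜ ⊆ WinRegion A q (SafeObj S) := by
  intro v hv
  have hZ := compl_winRegion_reachObj_subset_cpre (A := A) (S := S) hpq
  obtain ⟨τ, hτ⟩ := exists_strategy_of_forall_move (A := A)
    (C := fun v => v ∈ A.cpre q (WinRegion A p (ReachObj S))ᶜ ∧ A.owner v = q)
    (Q := fun _ w => w ∈ (WinRegion A p (ReachObj S))ᶜ) fun v hv => hv.1.1 hv.2
  refine ⟨τ, fun ρ hρ h0 hcons m hm => ?_⟩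
  have hmem : ρ m ∈ (WinRegion A p (ReachObj S))ᶜ := by
    cases m with
    | zero => rwa [h0]
    | succ m =>
      exact succ_mem_of_trap hZ (fun _ _ h1 h2 => hτ _ _ ⟨h1, h2⟩) hρ (h0 ▸ hZ hv)
        (m := m + 1) (fun l _ => hcons l) m (Nat.lt_succ_self m)
  exact hmem (subset_winRegion_reachObj hm)

open OrderHom

/-- `Z ↦ cpre p (attractor of S ∩ Z)`, whose greatest fixed point is the Büchi winning region. -/
def buchiOp (A : Arena V 2) (p : Fin 2) (S : Set V) : Set V →o Set V where
  toFun Z := A.cpre p (WinRegion A p (ReachObj (S ∩ Z)))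
  monotone' _ _ h := A.cpre_mono p <| winRegion_mono fun _ ⟨k, hk⟩ => ⟨k, hk.1, h hk.2⟩

/-- From each vertex of `S ∩ gfp` (or the start) player `p` forces a later visit to `S ∩ gfp`;
restarting this at every visit yields infinitely many visits. -/
theorem gfp_buchiOp_subset : gfp (buchiOp A p S) ⊆ WinRegion A p (BuchiObj S) := by
  set G := gfp (buchiOp A p S)
  have hG : G ⊆ WinRegion A p {ρ | suffix ρ 1 ∈ ReachObj (S ∩ G)} := by
    intro v hv
    have hfix : buchiOp A p S G = G := (buchiOp A p S).map_gfp
    rw [← hfix] at hv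
    exact cpre_winRegion_subset _ hv
  choose! g hg using fun w (hw : w ∈ G) => hG hw
  intro v hv
  refine ⟨Strategy.restart (S ∩ G) g, fun ρ hρ h0 hcons => ?_⟩
  by_contra hnot
  obtain ⟨j, hj⟩ : ∃ j, ∀ k, j ≤ k → ρ k ∉ S := by simpa [BuchiObj] using hnot
  set a := Nat.findGreatest (fun m => ρ m ∈ S ∩ G) j
  have ha : a ≠ 0 → ρ a ∈ S ∩ G := Nat.findGreatest_of_ne_zero rfl
  have hlast : ∀ l, a < l → ρ l ∉ S ∩ G := by
    intro l hal hl
    rcases le_or_gt l j with hlj | hjl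
    · exact Nat.findGreatest_is_greatest hal hlj hl
    · exact hj l hjl.le hl.1
  have haG : ρ a ∈ G := by
    rcases eq_or_ne a 0 with h | h
    · rw [h, h0]; exact hv
    · exact (ha h).2
  obtain ⟨k, hk⟩ := hg _ haG _ (hρ.suffix a) rfl (hcons.suffix_of_restart ha hlast)
  exact hlast (a + (1 + k)) (by omega) hk

/-- If `p` cannot force, in one step, a visit to `S` outside `q`'s co-Büchi winning region `P`,
then `q` avoids that set until the next visit to `S`, which lies in `P`; from there `q` wins. -/
theorem compl_winRegion_coBuchiObj_subset_gfp (hpq : p ≠ q) :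
    (WinRegion A q (CoBuchiObj S))ᶜ ⊆ gfp (buchiOp A p S) := by
  set P := WinRegion A q (CoBuchiObj S)
  set Z := (WinRegion A p (ReachObj (S ∩ Pᶜ)))ᶜ
  refine le_gfp _ fun u hu => ?_
  by_contra hnot
  refine hu ?_
  have hu' : u ∈ A.cpre q Z := by
    rw [← compl_cpre_compl hpq, compl_compl]; exact hnot
  have hZ : Z ⊆ A.cpre q Z := compl_winRegion_reachObj_subset_cpre hpq
  obtain ⟨τ, hτ⟩ := exists_strategy_of_forall_move (A := A)
    (C := fun v => v ∈ A.cpre q Z ∧ A.owner v = q) (Q := fun _ w => w ∈ Z)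
    fun v hv => hv.1.1 hv.2
  choose! g hg using fun w (hw : w ∈ P) => hw
  refine ⟨τ.switch (fun l x => 0 < l ∧ x ∈ S) (fun _ x => g x), fun ρ hρ h0 hcons => ?_⟩
  by_cases hS : ∃ k, 0 < k ∧ ρ k ∈ S
  · obtain ⟨k, ⟨hk0, hkS⟩, hfirst⟩ : ∃ k, (0 < k ∧ ρ k ∈ S) ∧ ∀ l < k, ¬ (0 < l ∧ ρ l ∈ S) :=
      ⟨Nat.find hS, Nat.find_spec hS, fun l => Nat.find_min hS⟩
    have hkZ : ρ k ∈ Z := by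
      obtain ⟨l, rfl⟩ : ∃ l, k = l + 1 := ⟨k - 1, by omega⟩
      refine succ_mem_of_trap hZ (fun _ _ h1 h2 => hτ _ _ ⟨h1, h2⟩) hρ (h0 ▸ hu') (m := l + 1)
        (fun l' hl' hown => ?_) l (by omega)
      rw [hcons l' hown,
        Strategy.switch_next_of_forall_not (ρ := ρ) fun l'' hl'' => hfirst l'' (by omega)]
    have hkP : ρ k ∈ P := by
      by_contra hkP
      exact hkZ (subset_winRegion_reachObj ⟨hkS, hkP⟩)
    exact suffix_mem_coBuchiObj_iff.1 <|
      hg _ hkP _ (hρ.suffix k) rfl (hcons.suffix_of_switch ⟨hk0, hkS⟩ hfirst)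
  · exact ⟨1, fun k hk hkS => hS ⟨k, hk, hkS⟩⟩

theorem compl_winRegion_buchiObj_subset (hpq : p ≠ q) :
    (WinRegion A p (BuchiObj S))ᶜ ⊆ WinRegion A q (CoBuchiObj S) := fun _ hv => by
  by_contra h
  exact hv (gfp_buchiOp_subset (compl_winRegion_coBuchiObj_subset_gfp hpq h))

theorem compl_winRegion_coBuchiObj_subset (hpq : p ≠ q) :
    (WinRegion A p (CoBuchiObj S))ᶜ ⊆ WinRegion A q (BuchiObj S) := fun _ hv =>
  gfp_buchiOp_subset (compl_winRegion_coBuchiObj_subset_gfp hpq.symm hv)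

theorem mem_winRegion_compl_of_notMem {Ω : Set (ℕ → V)}
    (hΩ : Ω = ReachObj S ∨ Ω = BuchiObj S ∨ Ω = CoBuchiObj S) (hpq : p ≠ q) {v : V}
    (hv : v ∉ WinRegion A p Ω) : v ∈ WinRegion A q Ωᶜ := by
  rcases hΩ with rfl | rfl | rfl
  · exact winRegion_mono (fun ρ hρ ⟨j, hj⟩ => hρ j hj) (compl_winRegion_reachObj_subset hpq hv)
  · refine winRegion_mono (fun ρ ⟨j, hj⟩ hB => ?_) (compl_winRegion_buchiObj_subset hpq hv)
    obtain ⟨k, hjk, hk⟩ := hB j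
    exact hj k hjk hk
  · refine winRegion_mono (fun ρ hB ⟨j, hj⟩ => ?_) (compl_winRegion_coBuchiObj_subset hpq hv)
    obtain ⟨k, hjk, hk⟩ := hB j
    exact hj k hjk hk

end TwoPlayer

section Coalition

variable {A : Arena V n} {i : Fin n}

def Strategy.ofCoalition (σ : (coalition A i).Strategy) : A.Strategy := ⟨σ.next, σ.valid⟩

lemma coalition_owner_eq_zero {v : V} : (coalition A i).owner v = 0 ↔ A.owner v = i := by
  by_cases h : A.owner v = i <;> simp [coalition, h]

lemma coalition_owner_eq_one {v : V} : (coalition A i).owner v = 1 ↔ A.owner v ≠ i := by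
  by_cases h : A.owner v = i <;> simp [coalition, h]

lemma consistent_coalition_zero_iff {σ : (coalition A i).Strategy} {ρ : ℕ → V} :
    (coalition A i).Consistent 0 σ ρ ↔ A.Consistent i σ.ofCoalition ρ := by
  simp only [Consistent, coalition_owner_eq_zero]; rfl

end Coalition

section Equilibria

variable {A : Arena V n} {i : Fin n} {Ω : Fin n → Set (ℕ → V)} {π : ℕ → V}

theorem notMem_coalWin_of_isNEObj (hΩ : ∀ k ρ a, suffix ρ a ∈ Ω k → ρ ∈ Ω k)
    {σ : Fin n → A.Strategy} (hNE : A.IsNEObj Ω σ (π 0)) (hout : outcome A σ (π 0) = π)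
    (hπ : π ∉ Ω i) (j : ℕ) : π j ∉ coalWin A i (Ω i) := by
  rintro ⟨σw, hσw⟩
  set τ : A.Strategy := (σ i).switch (fun l _ => l = j) (fun _ _ => σw.ofCoalition)
  set ρ := outcome A (Function.update σ i τ) (π 0)
  have hρstep : ∀ m, ρ (m + 1) = (Function.update σ i τ (A.owner (ρ m))).next (pref ρ m) (ρ m) :=
    outcome_succ _ _
  have hagree : ∀ l ≤ j, ρ l = π l := by
    refine eq_of_steps (F := fun h v => (σ (A.owner v)).next h v) rfl (fun l hl => ?_)
      (fun l _ => hout ▸ outcome_succ σ (π 0) l)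
    rw [hρstep]
    by_cases hown : A.owner (ρ l) = i
    · rw [hown, Function.update_self, Strategy.switch_next_of_forall_not (ρ := ρ) (by omega)]
    · rw [Function.update_of_ne hown]
  have hcons : A.Consistent i τ ρ := by
    simpa using outcome_consistent (Function.update σ i τ) (π 0) i
  have hsuffix : suffix ρ j ∈ Ω i :=
    hσw _ ((outcome_isPlay _ _).suffix j) (by simp [hagree j le_rfl])
      (consistent_coalition_zero_iff.2 (hcons.suffix_of_switch rfl (by omega)))
  exact hπ (hout ▸ hNE i τ (hΩ i ρ j hsuffix))

/-- Follow `π`; once the play leaves `π` at position `k`, punish the owner of `π (k - 1)`. -/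
noncomputable def punishingStrategy (π : ℕ → V)
    (pun : (i : Fin n) → V → (coalition A i).Strategy) : A.Strategy :=
  (Strategy.follow π).switch (fun k x => x ≠ π k)
    (fun k x => (pun (A.owner (π (k - 1))) x).ofCoalition)

lemma outcome_punishingStrategy (hπ : A.IsPlay π)
    (pun : (i : Fin n) → V → (coalition A i).Strategy) :
    outcome A (fun _ => punishingStrategy π pun) (π 0) = π :=
  outcome_eq_of_steps fun m => by
    rw [punishingStrategy, Strategy.switch_next_of_forall_not (ρ := π) (by simp),
      Strategy.follow_next hπ rfl]

lemma owner_eq_of_first_deviation {pun : (i : Fin n) → V → (coalition A i).Strategy}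
    {ρ : ℕ → V} {d : ℕ} (hπ : A.IsPlay π)
    (hρ : ∀ m, A.owner (ρ m) ≠ i → ρ (m + 1) = (punishingStrategy π pun).next (pref ρ m) (ρ m))
    (hdev : ρ (d + 1) ≠ π (d + 1)) (hagree : ∀ l ≤ d, ρ l = π l) : A.owner (π d) = i := by
  by_contra hown
  refine hdev ?_
  rw [hρ d (hagree d le_rfl ▸ hown), punishingStrategy,
    Strategy.switch_next_of_forall_not (P := fun k x => x ≠ π k) (ρ := ρ)
      fun l hl => not_not.2 (hagree l hl),
    Strategy.follow_next hπ (hagree d le_rfl)]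

lemma consistent_suffix_of_first_deviation {pun : (i : Fin n) → V → (coalition A i).Strategy}
    {ρ : ℕ → V} {d : ℕ}
    (hρ : ∀ m, A.owner (ρ m) ≠ i → ρ (m + 1) = (punishingStrategy π pun).next (pref ρ m) (ρ m))
    (hdev : ρ (d + 1) ≠ π (d + 1)) (hagree : ∀ l ≤ d, ρ l = π l) (hown : A.owner (π d) = i) :
    (coalition A i).Consistent 1 (pun i (ρ (d + 1))) (suffix ρ (d + 1)) :=
  consistent_suffix_iff.2 fun m hm hown' => by
    rw [hρ m (coalition_owner_eq_one.1 hown'), punishingStrategy,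
      Strategy.switch_next_of_first (P := fun k x => x ≠ π k) hm hdev
        fun l hl => not_not.2 (hagree l (by omega)),
      Nat.add_sub_cancel, hown]
    rfl

theorem exists_isNEObj_outcome_eq {T : Fin n → Set V}
    (hΩ : ∀ i, Ω i = ReachObj (T i) ∨ Ω i = BuchiObj (T i) ∨ Ω i = CoBuchiObj (T i))
    (hπ : A.IsPlay π) (hcond : ∀ i, π ∉ Ω i → ∀ j, π j ∉ coalWin A i (Ω i)) :
    ∃ σ : Fin n → A.Strategy, A.IsNEObj Ω σ (π 0) ∧ outcome A σ (π 0) = π := by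
  choose! pun hpun using fun i v (hv : v ∉ coalWin A i (Ω i)) =>
    mem_winRegion_compl_of_notMem (hΩ i) (show (0 : Fin 2) ≠ 1 by decide) hv
  refine ⟨fun _ => punishingStrategy π pun, fun i τ hdev => ?_, outcome_punishingStrategy hπ pun⟩
  rw [outcome_punishingStrategy hπ pun]
  by_contra hπi
  set ρ := outcome A (Function.update (fun _ => punishingStrategy π pun) i τ) (π 0)
  have hρ : A.IsPlay ρ := outcome_isPlay _ _
  have hothers : ∀ m, A.owner (ρ m) ≠ i →
      ρ (m + 1) = (punishingStrategy π pun).next (pref ρ m) (ρ m) := fun m hm =>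
    (outcome_succ _ _ m).trans (by rw [Function.update_of_ne hm])
  have hdiff : ∃ k, ρ k ≠ π k := by
    by_contra h
    push Not at h
    exact hπi (funext h ▸ hdev)
  obtain ⟨k, hk, hfirst⟩ : ∃ k, ρ k ≠ π k ∧ ∀ l < k, ρ l = π l :=
    ⟨Nat.find hdiff, Nat.find_spec hdiff, fun l hl => not_not.1 (Nat.find_min hdiff hl)⟩
  have hk0 : k ≠ 0 := by rintro rfl; exact hk rfl
  obtain ⟨d, rfl⟩ : ∃ d, k = d + 1 := ⟨k - 1, by omega⟩
  have hagree : ∀ l ≤ d, ρ l = π l := fun l hl => hfirst l (by omega)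
  have hown := owner_eq_of_first_deviation hπ hothers hk hagree
  have hwin : ρ (d + 1) ∉ coalWin A i (Ω i) :=
    notMem_winRegion_of_edge (fun _ => mem_of_suffix_mem (hΩ i)) (hagree d le_rfl ▸ hcond i hπi d)
      (coalition_owner_eq_zero.2 (hagree d le_rfl ▸ hown)) (hρ d)
  exact hpun i _ hwin _ (hρ.suffix _) rfl
    (consistent_suffix_of_first_deviation hothers hk hagree hown)
    (suffix_mem_of_mem (hΩ i) hdev hπi hfirst)

end Equilibria

end Arena

open Arena

/-- Characterisation of Nash-equilibrium outcomes in games where every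
player has a reachability, Büchi or co-Büchi objective. -/
theorem ne_outcome_characterisation_reach_buchi_cobuchi
    (V : Type) (n : ℕ) (A : Arena V n) (T : Fin n → Set V)
    (Ω : Fin n → Set (ℕ → V))
    (hΩ : ∀ i, Ω i = ReachObj (T i) ∨ Ω i = BuchiObj (T i) ∨ Ω i = CoBuchiObj (T i))
    (π : ℕ → V) (hπ : A.IsPlay π) :
    (∃ σ : Fin n → A.Strategy, A.IsNEObj Ω σ (π 0) ∧ outcome A σ (π 0) = π) ↔
      ∀ i, π ∉ Ω i → ∀ j, π j ∉ coalWin A i (Ω i) := by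
  constructor
  · rintro ⟨σ, hNE, hout⟩ i hπi
    exact notMem_coalWin_of_isNEObj (fun i _ _ => mem_of_suffix_mem (hΩ i)) hNE hout hπi
  · exact exists_isNEObj_outcome_eq hΩ hπ
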